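/- arXiv:math/0506351 — 3 statements merged into one kernel-verified Lean document; each statement's English description precedes it below -/
import Mathlib

section
/- For all k >= 1 and r >= 1, every r-coloring of the interval [1, k^(2r-1)] admits a monochromatic k-term ascending wave; in particular AW(k;r) <= k^(2r-1). -/
/-- Arithmetic helper for the wave condition. -/
lemma aw_wave_arith (a b c A B C : ℕ) (h0 : A + 1 ≤ a) (h0' : a ≤ A + C)
    (h1 : A + 2 * B + C + 1 ≤ b) (h1' : b ≤ A + 2 * B + 2 * C)
    (h2 : A + 4 * B + 4 * C + 1 ≤ c) : b - a ≤ c - b := by omega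

/-- For all `k ≥ 1` and `r ≥ 1`, every `r`-coloring of `[1, k^(2r-1)]` admits a
monochromatic `k`-term ascending wave; in particular `AW(k;r) ≤ k^(2r-1)`. -/
theorem aw_upper_bound_pow (k r : ℕ) (hk : 1 ≤ k) (hr : 1 ≤ r)
    (χ : ℕ → Fin r) :
    ∃ w : ℕ → ℕ,
      (∀ i, i < k → 1 ≤ w i ∧ w i ≤ k ^ (2 * r - 1)) ∧
      (∀ i, i + 1 < k → w i < w (i + 1)) ∧
      (∀ i, 1 ≤ i → i + 1 < k → w i - w (i - 1) ≤ w (i + 1) - w i) ∧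
      (∀ i, i < k → χ (w i) = χ (w 0)) := by
  induction r, hr using Nat.le_induction with
  | base =>
    have hpow : k ^ (2 * 1 - 1) = k := by norm_num
    refine ⟨fun i => i + 1, ?_, ?_, ?_, ?_⟩
    · intro i hi; dsimp only; omega
    · intro i hi; dsimp only; omega
    · intro i h1 h2; dsimp only; omega
    · intro i hi; exact Subsingleton.elim _ _
  | succ r hr ih =>
    set L := k ^ (2 * r - 1) with hL
    have hLpos : 1 ≤ L := Nat.one_le_pow _ _ hk
    have hpow : k ^ (2 * (r + 1) - 1) = k ^ 2 * L := by
      rw [hL, ← pow_add]; congr 1; omega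
    have hsq : ∀ j, j < k → j * j < k ^ 2 := by
      intro j hj
      have : k ^ 2 = k * k := sq k
      nlinarith
    by_cases h : ∀ t, t < k ^ 2 →
        ∃ y, t * L + 1 ≤ y ∧ y ≤ (t + 1) * L ∧ χ y = Fin.last r
    · -- every block contains the last color
      have hy' : ∀ t, ∃ y, t < k ^ 2 →
          t * L + 1 ≤ y ∧ y ≤ (t + 1) * L ∧ χ y = Fin.last r := by
        intro t
        by_cases ht : t < k ^ 2
        · obtain ⟨y, hy⟩ := h t ht; exact ⟨y, fun _ => hy⟩
        · exact ⟨0, fun h' => absurd h' ht⟩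
      choose y hy using hy'
      refine ⟨fun j => y (j * j), ?_, ?_, ?_, ?_⟩
      · intro j hj
        dsimp only
        obtain ⟨hy1, hy2, _⟩ := hy (j * j) (hsq j hj)
        constructor
        · omega
        · rw [hpow]
          have h1 : (j * j + 1) * L ≤ k ^ 2 * L :=
            Nat.mul_le_mul_right _ (Nat.succ_le_of_lt (hsq j hj))
          linarith
      · intro i hi
        dsimp only
        obtain ⟨_, hu, _⟩ := hy (i * i) (hsq i (by omega))
        obtain ⟨hl, _, _⟩ := hy ((i + 1) * (i + 1)) (hsq (i + 1) hi)
        have hmul : (i * i + 1) * L ≤ ((i + 1) * (i + 1)) * L :=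
          Nat.mul_le_mul_right _ (by nlinarith)
        linarith
      · intro i h1 h2
        obtain ⟨m, rfl⟩ : ∃ m, i = m + 1 := ⟨i - 1, by omega⟩
        dsimp only
        simp only [Nat.add_sub_cancel]
        obtain ⟨h0l, h0u, _⟩ := hy (m * m) (hsq m (by omega))
        obtain ⟨h1l, h1u, _⟩ := hy ((m + 1) * (m + 1)) (hsq (m + 1) (by omega))
        obtain ⟨h2l, _, _⟩ := hy ((m + 2) * (m + 2)) (hsq (m + 2) (by omega))
        apply aw_wave_arith _ _ _ (m * m * L) (m * L) L
        · linarith [show (m * m) * L = m * m * L from by ring]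
        · linarith [show (m * m + 1) * L = m * m * L + L from by ring]
        · linarith [show ((m + 1) * (m + 1)) * L = m * m * L + 2 * (m * L) + L
            from by ring]
        · linarith [show ((m + 1) * (m + 1) + 1) * L
            = m * m * L + 2 * (m * L) + 2 * L from by ring]
        · linarith [show ((m + 2) * (m + 2)) * L
            = m * m * L + 4 * (m * L) + 4 * L from by ring]
      · intro i hi
        dsimp only
        obtain ⟨_, _, hc⟩ := hy (i * i) (hsq i hi)
        obtain ⟨_, _, hc0⟩ := hy (0 * 0) (hsq 0 (by omega))
        simp only [Nat.zero_mul] at hc0 ⊢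
        rw [hc, hc0]
    · -- some block misses the last color
      push_neg at h
      obtain ⟨t, ht, hblock⟩ := h
      obtain ⟨T, hT⟩ : ∃ T, T = t * L := ⟨_, rfl⟩
      set χ' : ℕ → Fin r := fun x => ⟨min (χ (x + T)).val (r - 1), by omega⟩
        with hχ'
      obtain ⟨w', hw'b, hw'inc, hw'wave, hw'col⟩ := ih χ'
      have hval : ∀ i, i < k → (χ (w' i + T)).val < r := by
        intro i hi
        obtain ⟨hb1, hb2⟩ := hw'b i hi
        have hne : χ (w' i + T) ≠ Fin.last r := by
          apply hblock
          · omega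
          · have : (t + 1) * L = T + L := by rw [hT]; ring
            omega
        have hlt := (χ (w' i + T)).isLt
        rcases Nat.lt_or_ge (χ (w' i + T)).val r with h' | h'
        · exact h'
        · exact absurd (Fin.ext (by simp [Fin.val_last]; omega)) hne
      refine ⟨fun i => w' i + T, ?_, ?_, ?_, ?_⟩
      · intro i hi
        dsimp only
        obtain ⟨hb1, hb2⟩ := hw'b i hi
        constructor
        · omega
        · rw [hpow]
          have h1 : (t + 1) * L ≤ k ^ 2 * L :=
            Nat.mul_le_mul_right _ (by omega)
          have h2 : (t + 1) * L = T + L := by rw [hT]; ring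
          omega
      · intro i hi
        dsimp only
        have := hw'inc i hi
        omega
      · intro i h1 h2
        obtain ⟨m, rfl⟩ : ∃ m, i = m + 1 := ⟨i - 1, by omega⟩
        have hwv := hw'wave (m + 1) (by omega) h2
        dsimp only
        simp only [Nat.add_sub_cancel] at hwv ⊢
        have hi1 := hw'inc m (by omega)
        have hi2 := hw'inc (m + 1) h2
        omega
      · intro i hi
        dsimp only
        have hcol := hw'col i hi
        have hvi := hval i hi
        have hv0 := hval 0 (by omega)
        have h1 := congrArg Fin.val hcol
        simp only [hχ'] at h1
        rw [Nat.min_eq_left (by omega), Nat.min_eq_left (by omega)] at h1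
        exact Fin.ext h1
end

section
/- Every 3-coloring of [1, 13] contains a monochromatic 3-term ascending wave, i.e., AW(3;3) <= 13 = 3^2 + 3 + 1. -/
/-- Every 3-coloring of `[1, 13]` contains a monochromatic 3-term ascending
wave, i.e. `AW(3;3) ≤ 13`. -/
theorem AW_three_three_le_thirteen (χ : ℕ → Fin 3) :
    ∃ a b c : ℕ, 1 ≤ a ∧ a < b ∧ b < c ∧ c ≤ 13 ∧
      b - a ≤ c - b ∧ χ a = χ b ∧ χ b = χ c := by
  -- pigeonhole: some color has at least 5 elements in [1,13]
  have hmaps : ∀ a ∈ Finset.Icc 1 13, χ a ∈ (Finset.univ : Finset (Fin 3)) := by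
    intro a _; exact Finset.mem_univ _
  have hcard : (Finset.univ : Finset (Fin 3)).card * 4 < (Finset.Icc 1 13).card := by
    simp
  obtain ⟨i, -, hi⟩ :=
    Finset.exists_lt_card_fiber_of_mul_lt_card_of_maps_to hmaps hcard
  set s := (Finset.Icc 1 13).filter (fun a => χ a = i) with hs
  have h5 : 5 ≤ s.card := hi
  obtain ⟨t, hts, htcard⟩ := Finset.exists_subset_card_eq h5
  let e := t.orderEmbOfFin htcard
  have hmem : ∀ j : Fin 5, e j ∈ s := fun j => hts (t.orderEmbOfFin_mem htcard j)
  have hcol : ∀ j : Fin 5, χ (e j) = i := fun j => (Finset.mem_filter.mp (hmem j)).2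
  have hIcc : ∀ j : Fin 5, 1 ≤ e j ∧ e j ≤ 13 := fun j =>
    Finset.mem_Icc.mp (Finset.mem_filter.mp (hmem j)).1
  have hlt : ∀ j k : Fin 5, j < k → e j < e k := fun j k h => e.strictMono h
  set x1 := e 0; set x2 := e 1; set x3 := e 2; set x4 := e 3; set x5 := e 4
  have h12 : x1 < x2 := hlt 0 1 (by decide)
  have h23 : x2 < x3 := hlt 1 2 (by decide)
  have h34 : x3 < x4 := hlt 2 3 (by decide)
  have h45 : x4 < x5 := hlt 3 4 (by decide)
  have h1 : 1 ≤ x1 := (hIcc 0).1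
  have h5' : x5 ≤ 13 := (hIcc 4).2
  have key : (x2 - x1 ≤ x3 - x2) ∨ (x3 - x2 ≤ x4 - x3) ∨ (x4 - x3 ≤ x5 - x4) ∨
      (x2 - x1 ≤ x5 - x2) ∨ (x3 - x2 ≤ x5 - x3) := by omega
  have c1 := hcol 0; have c2 := hcol 1; have c3 := hcol 2
  have c4 := hcol 3; have c5 := hcol 4
  rcases key with h | h | h | h | h
  · exact ⟨x1, x2, x3, h1, h12, h23, by omega, h, c1.trans c2.symm, c2.trans c3.symm⟩
  · exact ⟨x2, x3, x4, by omega, h23, h34, by omega, h, c2.trans c3.symm, c3.trans c4.symm⟩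
  · exact ⟨x3, x4, x5, by omega, h34, h45, h5', h, c3.trans c4.symm, c4.trans c5.symm⟩
  · exact ⟨x1, x2, x5, h1, h12, by omega, h5', h, c1.trans c2.symm, c2.trans c5.symm⟩
  · exact ⟨x2, x3, x5, by omega, h23, by omega, h5', h, c2.trans c3.symm, c3.trans c5.symm⟩
end

section
/- For every k >= 1 there exists a 2-coloring of [1, k^2 - k] with no monochromatic k-term ascending wave; hence AW(k;2) >= k^2 - k + 1. -/
/-- A monochromatic `k`-term ascending wave in `[1, N]` under the coloring `χ`. -/
def MonoAscWaveIn (k r N : ℕ) (χ : ℕ → Fin r) (w : ℕ → ℕ) : Prop :=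
  (∀ i, i < k → 1 ≤ w i ∧ w i ≤ N) ∧
  (∀ i, i + 1 < k → w i < w (i + 1)) ∧
  (∀ i, 1 ≤ i → i + 1 < k → w i - w (i - 1) ≤ w (i + 1) - w i) ∧
  (∀ i, i < k → χ (w i) = χ (w 0))

namespace AWaux

/-- Block index: `blk n = m` iff `m^2 - m < n ≤ m^2 + m` (for `n ≥ 1`). -/
def blk (n : ℕ) : ℕ := (Nat.sqrt (4 * n) + 1) / 2

/-- The coloring: `0` on `(m^2-m, m^2]`, `1` on `(m^2, m^2+m]`. -/
def chi (n : ℕ) : Fin 2 := if n ≤ blk n * blk n then 0 else 1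

lemma blk_spec {n : ℕ} (hn : 1 ≤ n) :
    1 ≤ blk n ∧ blk n * blk n < n + blk n ∧ n ≤ blk n * blk n + blk n := by
  set s := Nat.sqrt (4 * n) with hs
  have h1 : s * s ≤ 4 * n := Nat.sqrt_le (4 * n)
  have h2 : 4 * n < (s + 1) * (s + 1) := Nat.lt_succ_sqrt (4 * n)
  have hm : blk n = (s + 1) / 2 := rfl
  set m := (s + 1) / 2 with hmd
  have e1 : 2 * m ≤ s + 1 := by omega
  have e2 : s ≤ 2 * m := by omega
  have hs1 : 1 ≤ s := by
    rcases Nat.eq_zero_or_pos s with h | h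
    · rw [h] at h2; omega
    · exact h
  have hm1 : 1 ≤ m := by omega
  rw [hm]
  refine ⟨hm1, ?_, ?_⟩
  · -- m*m < n + m, from s ≥ 2m-1, s*s ≤ 4n
    have hkey : (2 * m - 1) * (2 * m - 1) ≤ s * s := Nat.mul_le_mul (by omega) (by omega)
    nlinarith [hkey, h1]
  · -- n ≤ m*m + m from 4n < (s+1)^2 ≤ (2m+1)^2
    have hkey : (s + 1) * (s + 1) ≤ (2 * m + 1) * (2 * m + 1) :=
      Nat.mul_le_mul (by omega) (by omega)
    nlinarith [hkey, h2]

lemma blk_mono {a b : ℕ} (ha : 1 ≤ a) (hab : a ≤ b) : blk a ≤ blk b := by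
  have hb : 1 ≤ b := le_trans ha hab
  obtain ⟨hp1, hp2, hp3⟩ := blk_spec ha
  obtain ⟨hq1, hq2, hq3⟩ := blk_spec hb
  by_contra hcon
  push_neg at hcon
  set p := blk a
  set q := blk b
  have h : q + 1 ≤ p := hcon
  have hkey : (q + 1) * (q + 1) ≤ p * p := Nat.mul_le_mul h h
  nlinarith [hp2, hq3, hkey]

/-- Same block, same color ⇒ close together. -/
lemma same_block {a b m : ℕ} (ha : 1 ≤ a) (hab : a ≤ b)
    (hma : blk a = m) (hmb : blk b = m) (hc : chi a = chi b) : b < a + m := by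
  have hb : 1 ≤ b := le_trans ha hab
  obtain ⟨hp1, hp2, hp3⟩ := blk_spec ha
  obtain ⟨hq1, hq2, hq3⟩ := blk_spec hb
  rw [hma] at hp1 hp2 hp3
  rw [hmb] at hq1 hq2 hq3
  unfold chi at hc
  rw [hma, hmb] at hc
  split_ifs at hc with h1 h2 h2
  · -- both ≤ m^2 : a > m^2 - m, b ≤ m^2
    omega
  · exact absurd hc (by decide)
  · exact absurd hc (by decide)
  · -- both > m^2 : a ≥ m^2+1, b ≤ m^2+m
    omega

/-- A same-colored jump to a strictly larger block is at least the new block's size. -/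
lemma jump {a b : ℕ} (ha : 1 ≤ a) (hab : a ≤ b)
    (hlt : blk a < blk b) (hc : chi a = chi b) : a + blk b ≤ b := by
  have hb : 1 ≤ b := le_trans ha hab
  obtain ⟨hp1, hp2, hp3⟩ := blk_spec ha
  obtain ⟨hq1, hq2, hq3⟩ := blk_spec hb
  set p := blk a
  set q := blk b
  have hpq : (p + 1) * (p + 1) ≤ q * q := Nat.mul_le_mul hlt hlt
  unfold chi at hc
  split_ifs at hc with h1 h2 h2
  · -- color 0: a ≤ p*p, b > q*q - q
    nlinarith [h1, hq2, hpq]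
  · exact absurd hc (by decide)
  · exact absurd hc (by decide)
  · -- color 1: a ≤ p*p + p, b > q*q
    push_neg at h1 h2
    nlinarith [hp3, h2, hpq]

end AWaux

/-- For every `k ≥ 1` there is a 2-coloring of `[1, k^2 - k]` with no
monochromatic `k`-term ascending wave; hence `AW(k;2) ≥ k^2 - k + 1`. -/
theorem AW_two_lower_bound (k : ℕ) (hk : 1 ≤ k) :
    ∃ χ : ℕ → Fin 2, ¬ ∃ w : ℕ → ℕ, MonoAscWaveIn k 2 (k ^ 2 - k) χ w := by
  refine ⟨AWaux.chi, ?_⟩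
  rintro ⟨w, hbd, hlt, hconv, hcol⟩
  -- dispose of k = 1
  rcases Nat.lt_or_ge k 2 with hk1 | hk2
  · have hk1' : k = 1 := by omega
    subst hk1'
    have := hbd 0 (by omega)
    norm_num at this
    omega
  have hkk : k ^ 2 = k * k := by ring
  -- basic facts
  have hpos : ∀ i, i < k → 1 ≤ w i := fun i hi => (hbd i hi).1
  have hub : ∀ i, i < k → w i + k ≤ k * k := by
    intro i hi
    have h1 := (hbd i hi).2
    rw [hkk] at h1
    have hkk' : k ≤ k * k := Nat.le_mul_of_pos_left k (by omega)
    omega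
  set m : ℕ → ℕ := fun i => AWaux.blk (w i) with hmdef
  have hspec : ∀ i, i < k → 1 ≤ m i ∧ m i * m i < w i + m i ∧ w i ≤ m i * m i + m i :=
    fun i hi => AWaux.blk_spec (hpos i hi)
  have hmle : ∀ i, i < k → m i ≤ k - 1 := by
    intro i hi
    obtain ⟨h1, h2, h3⟩ := hspec i hi
    have hub' := hub i hi
    by_contra hcon
    have hkm : k ≤ m i := by omega
    have : k * k ≤ m i * k := Nat.mul_le_mul_right k hkm
    nlinarith [h2, hub', hkm]
  -- chain: strict increase
  have hchain : ∀ j, j < k → ∀ i, i ≤ j → w i + (j - i) ≤ w j := by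
    intro j
    induction j with
    | zero =>
      intro _ i hi
      have : i = 0 := by omega
      subst this; omega
    | succ n ih =>
      intro hj i hi
      rcases Nat.lt_or_ge i (n + 1) with h | h
      · have h1 := ih (by omega) i (by omega)
        have h2 := hlt n (by omega)
        omega
      · have : i = n + 1 := by omega
        subst this; omega
  have hmono : ∀ i j, i ≤ j → j < k → m i ≤ m j := by
    intro i j hij hj
    have := hchain j hj i hij
    exact AWaux.blk_mono (hpos i (by omega)) (by omega)
  have hcolor : ∀ i j, i < k → j < k → AWaux.chi (w i) = AWaux.chi (w j) := by
    intro i j hi hj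
    rw [hcol i hi, hcol j hj]
  -- jump propagates forward
  have Q : ∀ n, n + 1 < k → (∃ j, j < n ∧ m j < m (j + 1)) → m n < m (n + 1) := by
    intro n
    induction n with
    | zero => rintro _ ⟨j, hj, _⟩; omega
    | succ n ih =>
      rintro hn1 ⟨j, hj, hjump⟩
      have hjn : m n < m (n + 1) := by
        rcases Nat.lt_or_ge j n with h | h
        · exact ih (by omega) ⟨j, h, hjump⟩
        · have : j = n := by omega
          subst this; exact hjump
      show m (n + 1) < m (n + 2)
      by_contra hcon
      push_neg at hcon
      have heq : m (n + 2) = m (n + 1) :=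
        le_antisymm hcon (hmono (n + 1) (n + 2) (by omega) (by omega))
      -- jump at n gives big difference, within-step at n+1 gives small difference
      have hj1 : w n + m (n + 1) ≤ w (n + 1) :=
        AWaux.jump (hpos n (by omega)) (le_of_lt (hlt n (by omega))) hjn
          (hcolor n (n + 1) (by omega) (by omega))
      have hj2 : w (n + 2) < w (n + 1) + m (n + 1) :=
        AWaux.same_block (hpos (n + 1) (by omega)) (le_of_lt (hlt (n + 1) (by omega)))
          rfl heq (hcolor (n + 1) (n + 2) (by omega) (by omega))
      have hcv : w (n + 1) - w n ≤ w (n + 2) - w (n + 1) := by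
        have h := hconv (n + 1) (by omega) (by omega)
        simpa using h
      have hw1 : w n < w (n + 1) := hlt n (by omega)
      have hw2 : w (n + 1) < w (n + 2) := hlt (n + 1) (by omega)
      omega
  -- case split on existence of a jump
  by_cases hex : ∃ j, j + 1 < k ∧ m j < m (j + 1)
  · -- take the first jump t
    obtain ⟨t, ⟨ht1, htj⟩, htmin⟩ :
        ∃ t, (t + 1 < k ∧ m t < m (t + 1)) ∧
          ∀ j, j < t → ¬(j + 1 < k ∧ m j < m (j + 1)) :=
      ⟨Nat.find hex, Nat.find_spec hex, fun j hj => Nat.find_min hex hj⟩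
    -- before t, everything is in block m 0
    have hconst : ∀ j, j ≤ t → m j = m 0 := by
      intro j
      induction j with
      | zero => intro _; rfl
      | succ n ih =>
        intro hj
        have h1 := ih (by omega)
        have h2 : m (n + 1) ≤ m n := by
          by_contra hc
          push_neg at hc
          exact htmin n (by omega) ⟨by omega, hc⟩
        have h3 := hmono n (n + 1) (by omega) (by omega)
        omega
    -- first run fits in a block of size m 0, so t < m 0
    have hct : m t = m 0 := hconst t le_rfl
    have hsb : w t < w 0 + m 0 :=
      AWaux.same_block (hpos 0 (by omega))
        (by have := hchain t (by omega) 0 (by omega); omega)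
        rfl hct (hcolor 0 t (by omega) (by omega))
    have hch0 := hchain t (by omega) 0 (by omega)
    have htm : t + 1 ≤ m 0 := by omega
    -- from t on, every step is a jump
    have hall : ∀ j, t ≤ j → j + 1 < k → m j < m (j + 1) := by
      intro j hj hj1
      rcases Nat.eq_or_lt_of_le hj with h | h
      · subst h; exact htj
      · exact Q j hj1 ⟨t, h, htj⟩
    -- so m grows at least linearly after t
    have hgrow : ∀ j, t ≤ j → j < k → m t + (j - t) ≤ m j := by
      intro j
      induction j with
      | zero =>
        intro hj _
        have : t = 0 := by omega
        subst this; omega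
      | succ n ih =>
        intro hj hn
        rcases Nat.lt_or_ge t (n + 1) with h | h
        · have h1 := ih (by omega) (by omega)
          have h2 := hall n (by omega) hn
          omega
        · have : t = n + 1 := by omega
          subst this; omega
    have hg := hgrow (k - 1) (by omega) (by omega)
    have hle := hmle (k - 1) (by omega)
    omega
  · -- no jump at all: m constant, k points in one block of size ≤ k-1
    push_neg at hex
    have hconst : ∀ j, j < k → m j = m 0 := by
      intro j
      induction j with
      | zero => intro _; rfl
      | succ n ih =>
        intro hj
        have h1 := ih (by omega)
        have h2 := hex n (by omega)
        have h3 := hmono n (n + 1) (by omega) hj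
        omega
    have hc := hconst (k - 1) (by omega)
    have hsb : w (k - 1) < w 0 + m 0 :=
      AWaux.same_block (hpos 0 (by omega)) (by have := hchain (k - 1) (by omega) 0 (by omega); omega)
        rfl hc (hcolor 0 (k - 1) (by omega) (by omega))
    have hch := hchain (k - 1) (by omega) 0 (by omega)
    have hle := hmle 0 (by omega)
    omega
end
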